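/- arXiv:1602.05787 — 5 statements merged into one kernel-verified Lean document; each statement's English description precedes it below -/
import Mathlib

section
/- For every complex root of unity ζ (i.e., ζ^n = 1 for some positive integer n), one has ζ^4 + ζ^3 ≠ 1. Equivalently, no root of the polynomial X^4 + X^3 - 1 is a root of unity. -/
/-!
A root of unity ζ lies on the unit circle, so its conjugate is ζ⁻¹. Conjugating
ζ⁴ + ζ³ = 1 and clearing denominators shows that ζ is also a root of the reciprocal
polynomial X⁴ - X - 1, which is coprime to X⁴ + X³ - 1.
-/

theorem Complex.pow_four_eq_add_one_of_norm_eq_one {z : ℂ} (hz : ‖z‖ = 1)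
    (h : z ^ 4 + z ^ 3 = 1) : z ^ 4 = z + 1 := by
  have hz0 : z ≠ 0 := norm_ne_zero_iff.mp (hz ▸ one_ne_zero)
  have hinv : z⁻¹ ^ 4 + z⁻¹ ^ 3 = 1 := by
    simpa only [map_add, map_pow, map_one, ← Complex.inv_eq_conj hz] using
      congrArg (starRingEnd ℂ) h
  field_simp at hinv
  linear_combination -hinv

theorem no_root_of_unity_root (ζ : ℂ) (h : ∃ n : ℕ, 0 < n ∧ ζ ^ n = 1) :
    ζ ^ 4 + ζ ^ 3 ≠ 1 := by
  obtain ⟨n, hn, hζn⟩ := h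
  intro hζ
  have hrec := Complex.pow_four_eq_add_one_of_norm_eq_one
    (Complex.norm_eq_one_of_pow_eq_one hζn hn.ne') hζ
  -- a Bézout identity for the coprime polynomials X⁴ + X³ - 1 and X⁴ - X - 1
  have : (1 : ℂ) = 0 := by
    linear_combination (ζ ^ 3 - ζ ^ 2) * hζ + (-ζ ^ 3 + ζ - 1) * hrec
  exact one_ne_zero this
end

section
/- For every positive integer n, the polynomial X^4 + X^3 - 1 does not divide X^n - 1 in ℚ[X]. -/
/-! The quartic `X ^ 4 + X ^ 3 - 1` changes sign on `[0, 1]`, so it has a real root `r` with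
`0 < r < 1`. A divisor of `X ^ n - 1` would force `r ^ n = 1`, which is impossible for `n > 0`. -/

open Polynomial

theorem not_dvd_X_pow_sub_one_of_aeval_eq_zero {R A : Type*} [CommRing R] [CommRing A] [LinearOrder A]
    [IsStrictOrderedRing A] [Algebra R A] {p : R[X]} {r : A} (hr₀ : 0 < r) (hr₁ : r < 1)
    (hp : aeval r p = 0) {n : ℕ} (hn : n ≠ 0) : ¬ p ∣ X ^ n - 1 := by
  intro hdvd
  have hrn : r ^ n = 1 := by
    simpa [sub_eq_zero] using aeval_eq_zero_of_dvd_aeval_eq_zero hdvd hp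
  exact (pow_lt_one₀ hr₀.le hr₁ hn).ne hrn

theorem exists_mem_Ioo_zero_one_pow_four_add_pow_three_sub_one_eq_zero :
    ∃ r ∈ Set.Ioo (0 : ℝ) 1, r ^ 4 + r ^ 3 - 1 = 0 :=
  intermediate_value_Ioo (f := fun x : ℝ ↦ x ^ 4 + x ^ 3 - 1) zero_le_one (by fun_prop)
    (by norm_num)

theorem not_dvd_X_pow_sub_one (n : ℕ) (hn : 0 < n) :
    ¬ ((X ^ 4 + X ^ 3 - 1 : ℚ[X]) ∣ X ^ n - 1) := by
  obtain ⟨r, ⟨hr₀, hr₁⟩, hr⟩ := exists_mem_Ioo_zero_one_pow_four_add_pow_three_sub_one_eq_zero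
  exact not_dvd_X_pow_sub_one_of_aeval_eq_zero hr₀ hr₁ (by simpa using hr) hn.ne'
end

section
/- Let R be a commutative ring, and let u, v, t, A, B be units of R satisfying the two relations u²v² + u²v·B⁻¹ = v·t⁻¹·B⁻¹ + A·t⁻²·B⁻¹ and u²v² + u·v²·B⁻¹ = u·t⁻¹·B⁻¹ + A·t⁻²·B⁻¹. Then u² = v² if and only if (u - v)·(A - B) = 0. -/
/-!
Multiplying both relations by `B t²` clears the denominators:
`u²v²Bt² + u²vt² = vt + A` and `u²v²Bt² + uv²t² = ut + A`. Their difference is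
`t (u - v)(uvt + 1) = 0`, and modulo `(u - v)(uvt + 1)` the first relation turns
`(u - v)(A - B)` into `-t (u² - v²)`. Since `t` is a unit, both sides of the
equivalence say that this quantity vanishes.
-/

section

variable {R : Type*} [CommRing R]

theorem mul_add_mul_eq_of_add_mul_inv_eq {p w s A : R} (t B : Rˣ)
    (h : p + w * (B⁻¹ : Rˣ) = s * (t⁻¹ : Rˣ) * (B⁻¹ : Rˣ) + A * ((t⁻¹ : Rˣ) : R) ^ 2 * (B⁻¹ : Rˣ)) :
    p * B * t ^ 2 + w * t ^ 2 = s * t + A := by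
  linear_combination (B * t ^ 2 : R) * h + (s * t + A - w * t ^ 2) * B.mul_inv
    + (s * t * B * (B⁻¹ : Rˣ) + A * B * (B⁻¹ : Rˣ) * (1 + t * (t⁻¹ : Rˣ))) * t.mul_inv

theorem sub_mul_mul_mul_add_one_eq_zero {u v A B : R} (t : Rˣ)
    (h1 : u ^ 2 * v ^ 2 * B * t ^ 2 + u ^ 2 * v * t ^ 2 = v * t + A)
    (h2 : u ^ 2 * v ^ 2 * B * t ^ 2 + u * v ^ 2 * t ^ 2 = u * t + A) :
    (u - v) * (u * v * t + 1) = 0 :=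
  (Units.mul_right_eq_zero t).mp (by linear_combination h1 - h2)

theorem sub_mul_sub_eq_neg_mul_sq_sub_sq {u v t A B : R}
    (h1 : u ^ 2 * v ^ 2 * B * t ^ 2 + u ^ 2 * v * t ^ 2 = v * t + A)
    (hc : (u - v) * (u * v * t + 1) = 0) :
    (u - v) * (A - B) = -t * (u ^ 2 - v ^ 2) := by
  linear_combination (v - u) * h1 + (B * (u * v * t - 1) + u * t) * hc

end

theorem sq_eq_sq_iff (R : Type*) [CommRing R] (u v t A B : Rˣ)
    (h1 : (u : R) ^ 2 * v ^ 2 + (u : R) ^ 2 * v * (B⁻¹ : Rˣ)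
        = (v : R) * (t⁻¹ : Rˣ) * (B⁻¹ : Rˣ) + (A : R) * ((t⁻¹ : Rˣ) : R) ^ 2 * (B⁻¹ : Rˣ))
    (h2 : (u : R) ^ 2 * v ^ 2 + (u : R) * (v : R) ^ 2 * (B⁻¹ : Rˣ)
        = (u : R) * (t⁻¹ : Rˣ) * (B⁻¹ : Rˣ) + (A : R) * ((t⁻¹ : Rˣ) : R) ^ 2 * (B⁻¹ : Rˣ)) :
    (u : R) ^ 2 = (v : R) ^ 2 ↔ ((u : R) - v) * ((A : R) - B) = 0 := by
  have h1' := mul_add_mul_eq_of_add_mul_inv_eq t B h1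
  have h2' := mul_add_mul_eq_of_add_mul_inv_eq t B h2
  have key := sub_mul_sub_eq_neg_mul_sq_sub_sq h1' (sub_mul_mul_mul_add_one_eq_zero t h1' h2')
  rw [key, neg_mul, neg_eq_zero, Units.mul_right_eq_zero, sub_eq_zero]
end

section
/- Let K be a linearly ordered field, a, b positive elements of K with a ≠ b, and R = K[u,v]/(u² - a, v² - b). Then for every nonzero integer ℓ, every λ ∈ K, and all ε₁, ε₂ ∈ {0,1}, one has (u + v)^ℓ ≠ λ·u^{ε₁}·v^{ε₂} in R (where the negative powers of the unit u + v are taken in R). -/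
open MvPolynomial

noncomputable abbrev QHIdeal (K : Type*) [CommRing K] (a b : K) :
    Ideal (MvPolynomial (Fin 2) K) :=
  Ideal.span {X 0 ^ 2 - C a, X 1 ^ 2 - C b}

noncomputable abbrev QHRing (K : Type*) [CommRing K] (a b : K) : Type _ :=
  MvPolynomial (Fin 2) K ⧸ QHIdeal K a b

noncomputable def uQH (K : Type*) [CommRing K] (a b : K) : QHRing K a b :=
  Ideal.Quotient.mk (QHIdeal K a b) (X 0)

noncomputable def vQH (K : Type*) [CommRing K] (a b : K) : QHRing K a b :=
  Ideal.Quotient.mk (QHIdeal K a b) (X 1)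

/-!
Choose square roots `α`, `β` of `a`, `b` in an algebraic closure and evaluate at `(u, v) = (α, β)`
and `(α, -β)`: both `(α + β) ^ ℓ` and `(α - β) ^ ℓ` become `λ α ^ ε₁ β ^ ε₂` up to sign, so
`(a + b + 2αβ) ^ ℓ = (a + b - 2αβ) ^ ℓ`. But `(A ± δ) ^ n = p ± q δ` with `p, q` in the ordered
field and `q > 0` whenever `A > 0` and `δ ^ 2` is a nonnegative element of the field, so for `n ≠ 0`
the two powers differ by `2 q δ ≠ 0`.
-/

section BinomialConjugates

variable {K L : Type*} [Semiring K] [PartialOrder K] [IsStrictOrderedRing K] [CommRing L]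

theorem exists_add_pow_eq_and_sub_pow_eq (i : K →+* L) {A c : K} {δ : L} (hA : 0 < A)
    (hc : 0 ≤ c) (hδ : δ ^ 2 = i c) (n : ℕ) :
    ∃ p q : K, 0 ≤ p ∧ 0 < q ∧
      (i A + δ) ^ (n + 1) = i p + i q * δ ∧ (i A - δ) ^ (n + 1) = i p - i q * δ := by
  induction n with
  | zero => exact ⟨A, 1, hA.le, one_pos, by simp, by simp⟩
  | succ n ih =>
    obtain ⟨p, q, hp, hq, hplus, hminus⟩ := ih
    refine ⟨A * p + c * q, p + A * q, by positivity, by positivity, ?_, ?_⟩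
    · rw [pow_succ, hplus]
      simp only [map_add, map_mul]
      linear_combination i q * hδ
    · rw [pow_succ, hminus]
      simp only [map_add, map_mul]
      linear_combination i q * hδ

theorem add_pow_ne_sub_pow [IsDomain L] {i : K →+* L} (hi : Function.Injective i) {A c : K}
    {δ : L} (hA : 0 < A) (hc : 0 ≤ c) (hδ : δ ^ 2 = i c) (hδ0 : δ ≠ 0) {n : ℕ} (hn : n ≠ 0) :
    (i A + δ) ^ n ≠ (i A - δ) ^ n := by
  obtain ⟨m, rfl⟩ := Nat.exists_eq_succ_of_ne_zero hn
  obtain ⟨p, q, -, hq, hplus, hminus⟩ := exists_add_pow_eq_and_sub_pow_eq i hA hc hδ m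
  rw [hplus, hminus]
  intro h
  have h2q : i (2 * q) * δ = 0 := by
    simp only [map_mul, map_ofNat]
    linear_combination h
  have h2q0 : i (2 * q) ≠ 0 := (map_ne_zero_iff i hi).mpr (by positivity)
  exact mul_ne_zero h2q0 hδ0 h2q

theorem add_zpow_ne_sub_zpow {L : Type*} [Field L] {i : K →+* L} (hi : Function.Injective i)
    {A c : K} {δ : L} (hA : 0 < A) (hc : 0 ≤ c) (hδ : δ ^ 2 = i c) (hδ0 : δ ≠ 0) {ℓ : ℤ}
    (hℓ : ℓ ≠ 0) : (i A + δ) ^ ℓ ≠ (i A - δ) ^ ℓ := by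
  obtain ⟨n, rfl | rfl⟩ := ℓ.eq_nat_or_neg <;>
  · have hn : n ≠ 0 := by omega
    simpa using add_pow_ne_sub_pow hi hA hc hδ hδ0 hn

end BinomialConjugates

section Evaluation

variable {K : Type*} [CommRing K] {a b : K}

theorem QHRing.exists_algHom {L : Type*} [CommRing L] [Algebra K L] {x y : L}
    (hx : x ^ 2 = algebraMap K L a) (hy : y ^ 2 = algebraMap K L b) :
    ∃ φ : QHRing K a b →ₐ[K] L, φ (uQH K a b) = x ∧ φ (vQH K a b) = y := by
  have hker : QHIdeal K a b ≤ RingHom.ker (aeval ![x, y] : MvPolynomial (Fin 2) K →ₐ[K] L) := by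
    rw [Ideal.span_le, Set.insert_subset_iff, Set.singleton_subset_iff]
    simp [hx, hy]
  refine ⟨Ideal.Quotient.liftₐ _ (aeval ![x, y]) hker, ?_, ?_⟩
  · simpa [uQH] using DFunLike.congr_fun (Ideal.Quotient.liftₐ_comp _ _ hker) (X 0)
  · simpa [vQH] using DFunLike.congr_fun (Ideal.Quotient.liftₐ_comp _ _ hker) (X 1)

theorem AlgHom.add_zpow_eq_of_zpow_eq {L : Type*} [Field L] [Algebra K L]
    (φ : QHRing K a b →ₐ[K] L) {w : (QHRing K a b)ˣ}
    (hw : (w : QHRing K a b) = uQH K a b + vQH K a b) {ℓ : ℤ} {lam : K} {e f : ℕ}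
    (h : ((w ^ ℓ : (QHRing K a b)ˣ) : QHRing K a b) =
      algebraMap K (QHRing K a b) lam * uQH K a b ^ e * vQH K a b ^ f) :
    (φ (uQH K a b) + φ (vQH K a b)) ^ ℓ =
      algebraMap K L lam * φ (uQH K a b) ^ e * φ (vQH K a b) ^ f := by
  have hφw : φ ((w ^ ℓ : (QHRing K a b)ˣ) : QHRing K a b) = φ w ^ ℓ := by
    change ((Units.map (φ : QHRing K a b →* L) (w ^ ℓ) : Lˣ) : L) = _
    rw [map_zpow, Units.val_zpow_eq_zpow_val]
    rfl
  simpa [hφw, hw] using congrArg φ h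

end Evaluation

theorem zpow_u_add_v_ne_general (K : Type*) [Field K] [LinearOrder K] [IsStrictOrderedRing K] (a b : K)
    (ha : 0 < a) (hb : 0 < b)
    (w : (QHRing K a b)ˣ) (hw : (w : QHRing K a b) = uQH K a b + vQH K a b)
    (ℓ : ℤ) (hℓ : ℓ ≠ 0) (lam : K) (ε₁ ε₂ : ℕ) :
    ((w ^ ℓ : (QHRing K a b)ˣ) : QHRing K a b) ≠
      algebraMap K (QHRing K a b) lam * uQH K a b ^ ε₁ * vQH K a b ^ ε₂ := by
  intro h
  set i := algebraMap K (AlgebraicClosure K)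
  obtain ⟨α, hα⟩ := IsAlgClosed.exists_pow_nat_eq (i a) two_pos
  obtain ⟨β, hβ⟩ := IsAlgClosed.exists_pow_nat_eq (i b) two_pos
  obtain ⟨φ, hφu, hφv⟩ := QHRing.exists_algHom hα hβ
  obtain ⟨ψ, hψu, hψv⟩ := QHRing.exists_algHom hα (show (-β) ^ 2 = i b by rw [neg_sq, hβ])
  have hplus_eq := φ.add_zpow_eq_of_zpow_eq hw h
  have hminus_eq := ψ.add_zpow_eq_of_zpow_eq hw h
  rw [hφu, hφv] at hplus_eq
  rw [hψu, hψv, ← sub_eq_add_neg] at hminus_eq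
  have hsq : ((α + β) ^ 2) ^ ℓ = ((α - β) ^ 2) ^ ℓ := by
    rw [← zpow_natCast, zpow_comm, hplus_eq, ← zpow_natCast (α - β), zpow_comm, hminus_eq]
    rw [zpow_natCast, zpow_natCast, mul_pow, mul_pow (_ * _), pow_right_comm (-β), neg_sq,
      pow_right_comm β]
  have hαβ : α * β ≠ 0 := by
    refine mul_ne_zero ?_ ?_ <;> rintro rfl
    · exact ha.ne' (i.injective (by simpa using hα.symm))
    · exact hb.ne' (i.injective (by simpa using hβ.symm))
  refine add_zpow_ne_sub_zpow i.injective (add_pos ha hb) (c := 4 * a * b) (δ := 2 * (α * β))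
    (by positivity) ?_ (mul_ne_zero two_ne_zero hαβ) hℓ ?_
  · simp only [map_mul, map_ofNat, ← hα, ← hβ]
    ring
  · convert hsq using 2 <;> rw [map_add, ← hα, ← hβ] <;> ring

theorem zpow_u_add_v_ne (K : Type*) [Field K] [LinearOrder K] [IsStrictOrderedRing K] (a b : K)
    (ha : 0 < a) (hb : 0 < b) (hab : a ≠ b)
    (w : (QHRing K a b)ˣ) (hw : (w : QHRing K a b) = uQH K a b + vQH K a b)
    (ℓ : ℤ) (hℓ : ℓ ≠ 0) (lam : K) (ε₁ ε₂ : ℕ) (hε₁ : ε₁ ≤ 1) (hε₂ : ε₂ ≤ 1) :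
    ((w ^ ℓ : (QHRing K a b)ˣ) : QHRing K a b) ≠
      algebraMap K (QHRing K a b) lam * uQH K a b ^ ε₁ * vQH K a b ^ ε₂ :=
  zpow_u_add_v_ne_general K a b ha hb w hw ℓ hℓ lam ε₁ ε₂
end

section
/- Let A = ℚ[T, T⁻¹] be the ring of Laurent polynomials over ℚ, let m ≥ 1 be an integer, and let B = A[X]/(T^{2m}·X⁴ + T^m·X³ - T⁻¹). Then for every positive integer n and every integer k, the image of X^n·T^k in B is not equal to 1. -/
/-!
Substitute `T = 1` and `X = α`, where `α ∈ (0, 1)` is a real root of `x⁴ + x³ - 1`. This ring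
homomorphism kills the defining relation, so it factors through `B`, and it sends `X ^ n * T ^ k`
to `α ^ n < 1`.
-/

open Polynomial LaurentPolynomial

theorem Ideal.Quotient.mk_span_singleton_ne_one_of_ringHom {R S : Type*} [CommRing R] [Semiring S]
    {f a : R} (φ : R →+* S) (hf : φ f = 0) (ha : φ a ≠ 1) :
    Ideal.Quotient.mk (Ideal.span {f}) a ≠ 1 := by
  have hker : ∀ r ∈ Ideal.span {f}, φ r = 0 := fun r hr => by
    obtain ⟨c, rfl⟩ := Ideal.mem_span_singleton'.1 hr
    rw [map_mul, hf, mul_zero]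
  intro h
  exact ha (by simpa using congrArg (Ideal.Quotient.lift _ φ hker) h)

theorem exists_mem_Ioo_pow_four_add_pow_three_eq_one :
    ∃ α ∈ Set.Ioo (0 : ℝ) 1, α ^ 4 + α ^ 3 = 1 := by
  have hcont : ContinuousOn (fun x : ℝ => x ^ 4 + x ^ 3) (Set.Icc 0 1) := by fun_prop
  exact intermediate_value_Ioo zero_le_one hcont (by norm_num)

theorem X_pow_ne_one_general (m : ℕ) (n : ℕ) (hn : 0 < n) (k : ℤ) :
    Ideal.Quotient.mk
      (Ideal.span {Polynomial.C (T (2 * m) : LaurentPolynomial ℚ) * X ^ 4 + Polynomial.C (T m) * X ^ 3 - Polynomial.C (T (-1))})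
      (X ^ n * Polynomial.C (T k)) ≠ 1 := by
  obtain ⟨α, ⟨hα0, hα1⟩, hα⟩ := exists_mem_Ioo_pow_four_add_pow_three_eq_one
  let φ := Polynomial.eval₂RingHom (LaurentPolynomial.eval₂ (algebraMap ℚ ℝ) 1) α
  apply Ideal.Quotient.mk_span_singleton_ne_one_of_ringHom φ
  · simp [φ, hα]
  · simpa [φ] using (pow_lt_one₀ hα0.le hα1 hn.ne').ne

theorem X_pow_ne_one (m : ℕ) (hm : 1 ≤ m) (n : ℕ) (hn : 0 < n) (k : ℤ) :
    Ideal.Quotient.mk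
      (Ideal.span {Polynomial.C (T (2 * m) : LaurentPolynomial ℚ) * X ^ 4 + Polynomial.C (T m) * X ^ 3 - Polynomial.C (T (-1))})
      (X ^ n * Polynomial.C (T k)) ≠ 1 :=
  X_pow_ne_one_general m n hn k
end
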